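/- Let t₁ ≤ t₂ be real numbers and let a, b : ℝ → ℝ be twice continuously differentiable with a(t) ≠ 0 for all t ∈ [t₁, t₂], and suppose a′(t₁) = a′(t₂) = b′(t₁) = b′(t₂) = 0. Then ∫_{t₁}^{t₂} ( a(t)²·b(t)·a′(t)² − a(t)³·b(t)·a″(t) − a(t)³·a′(t)·b′(t) + a(t)⁴·b″(t) − b(t)³ ) · ( b(t)·a′(t) − a(t)·b′(t) ) / (48·π²·a(t)⁵) dt = (1/(192·π²)) · ( b(t₂)⁴/a(t₂)⁴ − b(t₁)⁴/a(t₁)⁴ ). -/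

import Mathlib

/-!
Writing `w = a b' - b a'` (so that `w' = a b'' - b a''`), the integrand equals
`(b³ w / a⁵ + a' w² / a³ - w w' / a²) / (48π²)`, which is the derivative of
`(b⁴ / a⁴ - 2 w² / a²) / (192π²)`. Where `a'` and `b'` vanish, `w` vanishes too, so the
fundamental theorem of calculus leaves only the boundary values of `b⁴ / a⁴ / (192π²)`.
-/

open Real

noncomputable section

theorem ContDiff.hasDerivAt_deriv_two {f : ℝ → ℝ} (hf : ContDiff ℝ 2 f) (t : ℝ) :
    HasDerivAt (deriv f) (deriv (deriv f) t) t :=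
  (hf.differentiable_deriv_two t).hasDerivAt

theorem ContDiff.continuous_deriv_deriv_two {f : ℝ → ℝ} (hf : ContDiff ℝ 2 f) :
    Continuous (deriv (deriv f)) :=
  (hf.deriv' (n := 1)).continuous_deriv_one

/-- The coefficient `g` of `Â = g dt∧dx∧dy∧dz`, as a function of `a, b, a', b', a'', b''`. -/
def ahatDensity (a b a' b' a'' b'' : ℝ) : ℝ :=
  (a ^ 2 * b * a' ^ 2 - a ^ 3 * b * a'' - a ^ 3 * a' * b' + a ^ 4 * b'' - b ^ 3)
    * (b * a' - a * b') / (48 * π ^ 2 * a ^ 5)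

def ahatPotential (a b a' b' : ℝ) : ℝ :=
  b ^ 4 / (192 * π ^ 2 * a ^ 4) - (a * b' - b * a') ^ 2 / (96 * π ^ 2 * a ^ 2)

theorem ahatPotential_zero_zero (a b : ℝ) :
    ahatPotential a b 0 0 = 1 / (192 * π ^ 2) * (b ^ 4 / a ^ 4) := by
  simp only [ahatPotential, mul_zero, sub_zero, ne_eq, OfNat.ofNat_ne_zero, not_false_eq_true,
    zero_pow, zero_div]
  ring

theorem continuousOn_ahatDensity_comp {a b a' b' a'' b'' : ℝ → ℝ} {s : Set ℝ}
    (ha : Continuous a) (hb : Continuous b) (ha' : Continuous a') (hb' : Continuous b')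
    (ha'' : Continuous a'') (hb'' : Continuous b'') (hne : ∀ t ∈ s, a t ≠ 0) :
    ContinuousOn (fun t ↦ ahatDensity (a t) (b t) (a' t) (b' t) (a'' t) (b'' t)) s := by
  have hden : ∀ t ∈ s, 48 * π ^ 2 * a t ^ 5 ≠ 0 := fun t ht ↦ by
    have := hne t ht; positivity
  unfold ahatDensity
  exact ContinuousOn.div (by fun_prop) (by fun_prop) hden

theorem hasDerivAt_wronskian {a b a' b' : ℝ → ℝ} {a'' b'' t : ℝ}
    (ha : HasDerivAt a (a' t) t) (hb : HasDerivAt b (b' t) t)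
    (ha' : HasDerivAt a' a'' t) (hb' : HasDerivAt b' b'' t) :
    HasDerivAt (fun s ↦ a s * b' s - b s * a' s) (a t * b'' - b t * a'') t :=
  ((ha.mul hb').sub (hb.mul ha')).congr_deriv (by ring)

theorem hasDerivAt_ahatPotential_comp {a b a' b' : ℝ → ℝ} {a'' b'' t : ℝ}
    (ha : HasDerivAt a (a' t) t) (hb : HasDerivAt b (b' t) t)
    (ha' : HasDerivAt a' a'' t) (hb' : HasDerivAt b' b'' t) (hne : a t ≠ 0) :
    HasDerivAt (fun s ↦ ahatPotential (a s) (b s) (a' s) (b' s))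
      (ahatDensity (a t) (b t) (a' t) (b' t) a'' b'') t := by
  have hquartic := (hb.fun_pow 4).fun_div ((ha.fun_pow 4).const_mul (192 * π ^ 2))
    (by positivity)
  have hwronskian := ((hasDerivAt_wronskian ha hb ha' hb').fun_pow 2).fun_div
    ((ha.fun_pow 2).const_mul (96 * π ^ 2)) (by positivity)
  refine (hquartic.sub hwronskian).congr_deriv ?_
  unfold ahatDensity
  field_simp
  ring

end

/-- Integral of the Â-form over a Bianchi-type-II space-time region with product
structure near the boundary hypersurfaces. -/
theorem bianchi_II_Ahat_integral (t₁ t₂ : ℝ) (h : t₁ ≤ t₂) (a b : ℝ → ℝ)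
    (ha : ContDiff ℝ 2 a) (hb : ContDiff ℝ 2 b)
    (hane : ∀ t ∈ Set.Icc t₁ t₂, a t ≠ 0)
    (ha₁ : deriv a t₁ = 0) (ha₂ : deriv a t₂ = 0)
    (hb₁ : deriv b t₁ = 0) (hb₂ : deriv b t₂ = 0) :
    ∫ t in t₁..t₂,
        ((a t) ^ 2 * b t * (deriv a t) ^ 2 - (a t) ^ 3 * b t * deriv (deriv a) t
          - (a t) ^ 3 * deriv a t * deriv b t + (a t) ^ 4 * deriv (deriv b) t
          - (b t) ^ 3)
        * (b t * deriv a t - a t * deriv b t) / (48 * π ^ 2 * (a t) ^ 5)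
      = (1 / (192 * π ^ 2)) * ((b t₂) ^ 4 / (a t₂) ^ 4 - (b t₁) ^ 4 / (a t₁) ^ 4) := by
  rw [← Set.uIcc_of_le h] at hane
  have hda t : HasDerivAt a (deriv a t) t := (ha.differentiable two_ne_zero t).hasDerivAt
  have hdb t : HasDerivAt b (deriv b t) t := (hb.differentiable two_ne_zero t).hasDerivAt
  have hFTC := intervalIntegral.integral_eq_sub_of_hasDerivAt
    (fun t ht ↦ hasDerivAt_ahatPotential_comp (hda t) (hdb t)
      (ha.hasDerivAt_deriv_two t) (hb.hasDerivAt_deriv_two t) (hane t ht))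
    (continuousOn_ahatDensity_comp ha.continuous hb.continuous
      (ha.continuous_deriv one_le_two) (hb.continuous_deriv one_le_two)
      ha.continuous_deriv_deriv_two hb.continuous_deriv_deriv_two hane).intervalIntegrable
  simp only [ahatDensity] at hFTC
  rw [hFTC, ha₁, ha₂, hb₁, hb₂, ahatPotential_zero_zero, ahatPotential_zero_zero, mul_sub]
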